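/- For any symbol Q(λ) with coefficients in R one has the identity Q(h∂)* · e^{−y∂} = ( Q^y(h∂) · e^{y∂} )* in Ψ(R)[[y]] (pseudo-differential operators with formal power series in y as coefficients), where e^{±y∂} = Σ_{k≥0} (±y)ᵏ ∂ᵏ / k! and the adjoint on the right-hand side is applied coefficientwise in y. -/

import Mathlib

open scoped BigOperators

/-- Generalized binomial coefficient `C(k,l) = k(k-1)⋯(k-l+1)/l!` for `k : ℤ`. -/
def gbinom (k : ℤ) (l : ℕ) : ℚ :=
  (∏ i ∈ Finset.range l, ((k : ℚ) - i)) / (Nat.factorial l)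

/-- Pseudo-differential operators (and symbols): coefficient functions `ℤ → R`
with support bounded above.  The parameter `d` (the derivation) determines the product. -/
structure PDO (R : Type) [CommRing R] [Algebra ℚ R] (d : R →+ R) where
  coeff : ℤ → R
  bdd : ∃ N : ℤ, ∀ n : ℤ, N < n → coeff n = 0

namespace PDO

variable {R : Type} [CommRing R] [Algebra ℚ R] {d : R →+ R}

theorem ext' {A B : PDO R d} (h : A.coeff = B.coeff) : A = B := by
  cases A; cases B; cases h; rfl

set_option linter.unusedSectionVars false in
theorem iterD_zero (d : R →+ R) (j : ℕ) : d^[j] (0 : R) = 0 := by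
  induction j with
  | zero => rfl
  | succ j ih => rw [Function.iterate_succ_apply', ih, map_zero]

instance : Zero (PDO R d) := ⟨⟨fun _ => 0, ⟨0, fun _ _ => rfl⟩⟩⟩

instance : One (PDO R d) :=
  ⟨⟨fun n => if n = 0 then 1 else 0, ⟨0, fun n hn => if_neg (by omega)⟩⟩⟩

instance : Add (PDO R d) :=
  ⟨fun A B => ⟨fun n => A.coeff n + B.coeff n, by
    obtain ⟨N, hN⟩ := A.bdd
    obtain ⟨M, hM⟩ := B.bdd
    exact ⟨max N M, fun n hn => by
      show A.coeff n + B.coeff n = 0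
      rw [hN n (lt_of_le_of_lt (le_max_left N M) hn),
        hM n (lt_of_le_of_lt (le_max_right N M) hn), add_zero]⟩⟩⟩

instance : Neg (PDO R d) :=
  ⟨fun A => ⟨fun n => -A.coeff n, by
    obtain ⟨N, hN⟩ := A.bdd
    exact ⟨N, fun n hn => by show -A.coeff n = 0; rw [hN n hn, neg_zero]⟩⟩⟩

instance : SMul ℚ (PDO R d) :=
  ⟨fun c A => ⟨fun n => c • A.coeff n, by
    obtain ⟨N, hN⟩ := A.bdd
    exact ⟨N, fun n hn => by show c • A.coeff n = 0; rw [hN n hn, smul_zero]⟩⟩⟩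

instance : AddCommGroup (PDO R d) where
  add := (· + ·)
  zero := 0
  neg := Neg.neg
  add_assoc A B C := ext' (funext fun n => add_assoc (A.coeff n) (B.coeff n) (C.coeff n))
  zero_add A := ext' (funext fun n => zero_add (A.coeff n))
  add_zero A := ext' (funext fun n => add_zero (A.coeff n))
  add_comm A B := ext' (funext fun n => add_comm (A.coeff n) (B.coeff n))
  neg_add_cancel A := ext' (funext fun n => neg_add_cancel (A.coeff n))
  nsmul := nsmulRec
  zsmul := zsmulRec

/-- The product of pseudo-differential operators, determined by the commutation rule
`∂^k · f = Σ_{l ≥ 0} C(k,l) (∂^l f) ∂^(k-l)`. -/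
noncomputable instance : Mul (PDO R d) :=
  ⟨fun A B =>
    ⟨fun n => ∑ᶠ (k : ℤ) (m : ℤ),
        if _ : 0 ≤ k + m - n then
          A.coeff k * (gbinom k (k + m - n).toNat • (d^[(k + m - n).toNat] (B.coeff m)))
        else 0, by
      obtain ⟨N, hN⟩ := A.bdd
      obtain ⟨M, hM⟩ := B.bdd
      refine ⟨N + M, fun n hn => ?_⟩
      have hz : ∀ k m : ℤ,
          (if _ : 0 ≤ k + m - n then
            A.coeff k * (gbinom k (k + m - n).toNat • (d^[(k + m - n).toNat] (B.coeff m)))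
          else 0) = 0 := by
        intro k m
        by_cases hl : 0 ≤ k + m - n
        · rw [dif_pos hl]
          by_cases hk : N < k
          · rw [hN k hk, zero_mul]
          · rw [hM m (by omega), iterD_zero, smul_zero, mul_zero]
        · rw [dif_neg hl]
      simp only [hz, finsum_zero]⟩⟩

noncomputable def npow (A : PDO R d) : ℕ → PDO R d
  | 0 => 1
  | n + 1 => npow A n * A

noncomputable instance : Pow (PDO R d) ℕ := ⟨fun A n => A.npow n⟩

/-- The monomial `r ∂^k`. -/
def mono (r : R) (k : ℤ) : PDO R d :=
  ⟨fun n => if n = k then r else 0, ⟨k, fun n hn => if_neg (by omega)⟩⟩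

/-- The constant (order-zero) operator `r`. -/
def const (r : R) : PDO R d := mono r 0

/-- The operator `∂`. -/
def del : PDO R d := mono (1 : R) 1

/-- The operator `h∂`. -/
def hdel (h : Rˣ) : PDO R d := mono (h : R) 1

/-- The Lax operator `L = h²∂² + 2u`. -/
def Lop (h : Rˣ) (u : R) : PDO R d :=
  ⟨fun n => if n = 2 then (h : R) ^ 2 else if n = 0 then 2 * u else 0,
   ⟨2, fun n hn => by
      show (if n = 2 then (h : R) ^ 2 else if n = 0 then 2 * u else 0) = 0
      rw [if_neg (by omega), if_neg (by omega)]⟩⟩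

/-- The differential part `A₊`. -/
def pos (A : PDO R d) : PDO R d :=
  ⟨fun n => if 0 ≤ n then A.coeff n else 0, by
    obtain ⟨N, hN⟩ := A.bdd
    refine ⟨N, fun n hn => ?_⟩
    show (if 0 ≤ n then A.coeff n else 0) = 0
    by_cases h0 : (0 : ℤ) ≤ n
    · rw [if_pos h0]; exact hN n hn
    · rw [if_neg h0]⟩

/-- The integral part `A₋ = A − A₊`. -/
def negp (A : PDO R d) : PDO R d :=
  ⟨fun n => if n < 0 then A.coeff n else 0, ⟨0, fun n hn => if_neg (by omega)⟩⟩

/-- The residue `Res_∂ A = a₋₁`. -/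
def res (A : PDO R d) : R := A.coeff (-1)

/-- The formal adjoint, determined by `(f ∂^k)* = (−∂)^k · f`. -/
noncomputable def adj (A : PDO R d) : PDO R d :=
  ⟨fun n => ∑ᶠ k : ℤ,
      if _ : 0 ≤ k - n then
        (((-1 : ℚ) ^ k) * gbinom k (k - n).toNat) • (d^[(k - n).toNat] (A.coeff k))
      else 0, by
    obtain ⟨N, hN⟩ := A.bdd
    refine ⟨N, fun n hn => ?_⟩
    have hz : ∀ k : ℤ, (if _ : 0 ≤ k - n then
        (((-1 : ℚ) ^ k) * gbinom k (k - n).toNat) • (d^[(k - n).toNat] (A.coeff k))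
      else 0) = 0 := by
      intro k
      by_cases hl : 0 ≤ k - n
      · rw [dif_pos hl, hN k (by omega), iterD_zero, smul_zero]
      · rw [dif_neg hl]
    simp only [hz, finsum_zero]⟩

/-- The operator `P(h∂) = Σ pₙ hⁿ ∂ⁿ` associated to the symbol `P(λ) = Σ pₙ λⁿ`. -/
noncomputable def ofSymbol (h : Rˣ) (A : PDO R d) : PDO R d :=
  ⟨fun n => A.coeff n * ((h ^ n : Rˣ) : R), by
    obtain ⟨N, hN⟩ := A.bdd
    exact ⟨N, fun n hn => by show A.coeff n * ((h ^ n : Rˣ) : R) = 0; rw [hN n hn, zero_mul]⟩⟩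

/-- Apply `d^[i]` to each coefficient. -/
def mapD (i : ℕ) (A : PDO R d) : PDO R d :=
  ⟨fun n => d^[i] (A.coeff n), by
    obtain ⟨N, hN⟩ := A.bdd
    exact ⟨N, fun n hn => by show d^[i] (A.coeff n) = 0; rw [hN n hn, iterD_zero]⟩⟩

/-- The coefficientwise extension of an additive map `D : R →+ R`. -/
def mapHom (D : R →+ R) (A : PDO R d) : PDO R d :=
  ⟨fun n => D (A.coeff n), by
    obtain ⟨N, hN⟩ := A.bdd
    exact ⟨N, fun n hn => by show D (A.coeff n) = 0; rw [hN n hn, map_zero]⟩⟩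

/-- The commutator `[A, B] = AB − BA`. -/
noncomputable def comm (A B : PDO R d) : PDO R d := A * B - B * A

end PDO

/-- The Leibniz rule: `d` is a derivation. -/
def Leibniz {R : Type} [CommRing R] [Algebra ℚ R] (d : R →+ R) : Prop :=
  ∀ a b : R, d (a * b) = a * d b + b * d a

/-- `aₙ = 1/(2n+1)!!`. -/
def kdvA (n : ℕ) : ℚ := 1 / (Nat.doubleFactorial (2 * n + 1))

/-- `bₙ = (2n−1)!!` (with `b₀ = (−1)!! = 1`). -/
def kdvB (n : ℕ) : ℚ := (Nat.doubleFactorial (2 * n - 1) : ℕ)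


/-!
Put `P = Q(h∂)`. Since `h` is a constant, `Q^y(h∂) = P^y`, so it suffices to prove
`P* e^{-y∂} = (P^y e^{y∂})*` for every operator `P`, and we compare coefficients of `yᵏ ∂ⁿ`.
The `n`-th coefficient of `A*` is `Σⱼ W(j,n) ∂^{j-n} aⱼ` with `W(j,n) = (-1)ʲ C(j, j-n)`.
After reindexing, the identity comes down to `Σᵢ C(k,i) W(m+k-i, n) = (-1)ᵏ W(m, n-k)`,
the `k`-fold iterate of the Pascal recurrence `W(j+1,n) + W(j,n) = -W(j,n-1)`.
-/

open Finset

lemma gbinom_eq_choose (k : ℤ) (l : ℕ) : gbinom k l = Ring.choose (k : ℚ) l := by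
  rw [Ring.choose_eq_smul, ← Polynomial.aeval_eq_smeval, ← Polynomial.eval_map_algebraMap,
    descPochhammer_map, descPochhammer_eval_eq_prod_range, gbinom, smul_eq_mul, div_eq_inv_mul]

lemma gbinom_zero_right (k : ℤ) : gbinom k 0 = 1 := by simp [gbinom]

lemma gbinom_succ_succ (k : ℤ) (l : ℕ) :
    gbinom (k + 1) (l + 1) = gbinom k l + gbinom k (l + 1) := by
  simp only [gbinom_eq_choose, Int.cast_add, Int.cast_one, Ring.choose_succ_succ]

lemma finsum_sum_comp_add_right {G ι M : Type*} [AddGroup G] [AddCommMonoid M] (s : Finset ι)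
    (f : G → ι → M) (σ : ι → G) (hf : ∀ i ∈ s, (Function.support fun j => f j i).Finite) :
    ∑ᶠ j, ∑ i ∈ s, f j i = ∑ᶠ j, ∑ i ∈ s, f (j + σ i) i := by
  have hshift : ∀ i ∈ s, (Function.support fun j => f (j + σ i) i).Finite := fun i hi =>
    (hf i hi).preimage (add_left_injective (σ i)).injOn
  rw [finsum_sum_comm s f hf, finsum_sum_comm s _ hshift]
  exact sum_congr rfl fun i _ => (finsum_comp_equiv (Equiv.addRight (σ i))).symm

lemma iterate_map_rat_smul {M : Type*} [AddCommGroup M] [Module ℚ M] (d : M →+ M) (t : ℕ)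
    (c : ℚ) (a : M) : d^[t] (c • a) = c • d^[t] a :=
  map_rat_smul ((show AddMonoid.End M from d) ^ t) c a

lemma iterate_map_sum {ι M : Type*} [AddCommMonoid M] (d : M →+ M) (t : ℕ) (s : Finset ι)
    (f : ι → M) : d^[t] (∑ i ∈ s, f i) = ∑ i ∈ s, d^[t] (f i) :=
  map_sum ((show AddMonoid.End M from d) ^ t) f s

namespace Leibniz

variable {R : Type} [CommRing R] [Algebra ℚ R] {d : R →+ R}

lemma map_one (hd : Leibniz d) : d 1 = 0 := by
  have h := hd 1 1
  rw [one_mul, one_mul] at h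
  exact left_eq_add.1 h

lemma map_mul_eq_zero (hd : Leibniz d) {a b : R} (ha : d a = 0) (hb : d b = 0) :
    d (a * b) = 0 := by
  rw [hd, ha, hb, mul_zero, mul_zero, add_zero]

lemma map_units_inv_eq_zero (hd : Leibniz d) {u : Rˣ} (hu : d u = 0) : d ↑u⁻¹ = 0 := by
  have h := hd u ↑u⁻¹
  rw [Units.mul_inv, hd.map_one, hu, mul_zero, add_zero] at h
  rw [← Units.inv_mul_cancel_left u (d ↑u⁻¹), ← h, mul_zero]

lemma map_units_zpow_eq_zero (hd : Leibniz d) {u : Rˣ} (hu : d u = 0) (j : ℤ) :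
    d ↑(u ^ j) = 0 := by
  induction j using Int.induction_on with
  | zero => rw [zpow_zero, Units.val_one, hd.map_one]
  | succ j ih => rw [zpow_add_one, Units.val_mul, hd.map_mul_eq_zero ih hu]
  | pred j ih =>
    rw [zpow_sub_one, Units.val_mul, hd.map_mul_eq_zero ih (hd.map_units_inv_eq_zero hu)]

lemma iterate_map_mul_of_eq_zero (hd : Leibniz d) {u : R} (hu : d u = 0) (t : ℕ) (a : R) :
    d^[t] (a * u) = d^[t] a * u := by
  induction t with
  | zero => rfl
  | succ t ih =>
    rw [Function.iterate_succ_apply', Function.iterate_succ_apply', ih, hd, hu, mul_zero,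
      zero_add, mul_comm]

end Leibniz

namespace PDO

variable {R : Type} [CommRing R] [Algebra ℚ R] {d : R →+ R}

def adjWeight (j n : ℤ) : ℚ := if n ≤ j then (-1) ^ j * gbinom j (j - n).toNat else 0

lemma adjWeight_of_lt {j n : ℤ} (h : j < n) : adjWeight j n = 0 := if_neg (not_le.2 h)

lemma adjWeight_succ_add (j n : ℤ) :
    adjWeight (j + 1) n + adjWeight j n = -adjWeight j (n - 1) := by
  have hsign : (-1 : ℚ) ^ (j + 1) = -(-1) ^ j := by
    rw [zpow_add_one₀ (by norm_num)]; ring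
  rcases lt_or_ge j n with hjn | hnj
  · obtain rfl | hj := eq_or_lt_of_le (Int.add_one_le_iff.2 hjn)
    · simp [adjWeight, hsign, gbinom_zero_right]
    · simp [adjWeight_of_lt hj, adjWeight_of_lt hjn, adjWeight_of_lt (by omega : j < n - 1)]
  · obtain ⟨t, ht⟩ : ∃ t : ℕ, j - n = t := ⟨(j - n).toNat, by omega⟩
    simp only [adjWeight, if_pos (by omega : n ≤ j + 1), if_pos hnj, if_pos (by omega : n - 1 ≤ j),
      show (j + 1 - n).toNat = t + 1 by omega, show (j - (n - 1)).toNat = t + 1 by omega,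
      show (j - n).toNat = t by omega, hsign, gbinom_succ_succ]
    ring

lemma sum_choose_mul_adjWeight (k : ℕ) (m n : ℤ) :
    ∑ i ∈ range (k + 1), (k.choose i : ℚ) * adjWeight (m + (k - i : ℕ)) n =
      (-1) ^ k * adjWeight m (n - k) := by
  induction k generalizing n with
  | zero => simp
  | succ k ih =>
    have hpascal := sum_choose_succ_mul (fun _ j => adjWeight (m + j) n) k
    have hterm : ∀ i ∈ range (k + 1),
        (k.choose i : ℚ) * adjWeight (m + (k + 1 - i : ℕ)) n +
          (k.choose i : ℚ) * adjWeight (m + (k - i : ℕ)) n =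
        -((k.choose i : ℚ) * adjWeight (m + (k - i : ℕ)) (n - 1)) := by
      intro i hi
      rw [show ((k + 1 - i : ℕ) : ℤ) = (k - i : ℕ) + 1 by grind, ← add_assoc, ← mul_add,
        adjWeight_succ_add, mul_neg]
    rw [hpascal, ← sum_add_distrib, sum_congr rfl hterm, sum_neg_distrib, ih,
      show n - 1 - k = n - (k + 1 : ℕ) by push_cast; ring]
    ring

lemma sum_factorial_inv_mul_adjWeight (k : ℕ) (m n : ℤ) :
    ∑ i ∈ range (k + 1), ((k - i).factorial : ℚ)⁻¹ * ((i.factorial : ℚ)⁻¹ *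
      adjWeight (m + (k - i : ℕ)) n) = ((-1) ^ k * (k.factorial : ℚ)⁻¹) * adjWeight m (n - k) := by
  have hchoose : ∀ i ∈ range (k + 1), ((k - i).factorial : ℚ)⁻¹ * ((i.factorial : ℚ)⁻¹ *
      adjWeight (m + (k - i : ℕ)) n) =
      (k.factorial : ℚ)⁻¹ * ((k.choose i : ℚ) * adjWeight (m + (k - i : ℕ)) n) := by
    intro i hi
    rw [Nat.cast_choose ℚ (Nat.lt_succ_iff.1 (mem_range.1 hi))]
    field_simp
  rw [sum_congr rfl hchoose, ← mul_sum, sum_choose_mul_adjWeight]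
  ring

lemma coeff_mul_mono {r : R} (hr : d r = 0) (A : PDO R d) (K n : ℤ) :
    (A * mono r K).coeff n = A.coeff (n - K) * r := by
  have hconst : ∀ t : ℕ, t ≠ 0 → d^[t] r = 0 := fun t ht => by
    rw [← Nat.succ_pred_eq_of_ne_zero ht, Function.iterate_succ_apply, hr, iterD_zero]
  show (∑ᶠ (k : ℤ) (m : ℤ), _) = _
  rw [finsum_eq_single _ (n - K)]
  · rw [finsum_eq_single _ K]
    · simp [mono, gbinom_zero_right]
    · intro m hm
      simp [mono, hm]
  · intro k hk
    apply finsum_eq_zero_of_forall_eq_zero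
    intro m
    by_cases hm : m = K
    · subst hm
      split_ifs with hle
      · simp [mono, hconst _ (by omega : (k + m - n).toNat ≠ 0)]
      · rfl
    · simp [mono, hm]

lemma del_pow_eq_mono (hd1 : d 1 = 0) (K : ℕ) : (del : PDO R d) ^ K = mono 1 K := by
  induction K with
  | zero => rfl
  | succ K ih =>
    refine ext' (funext fun n => ?_)
    show ((del : PDO R d) ^ K * mono 1 1).coeff n = _
    rw [coeff_mul_mono hd1, ih, mul_one]
    simp only [mono, Nat.cast_succ, sub_eq_iff_eq_add]

lemma smul_mono (c : ℚ) (r : R) (K : ℤ) : c • (mono r K : PDO R d) = mono (c • r) K :=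
  ext' (funext fun n => by
    show c • (if n = K then r else 0) = if n = K then c • r else 0
    rw [smul_ite, smul_zero])

lemma coeff_mul_smul_del_pow (hd1 : d 1 = 0) (A : PDO R d) (c : ℚ) (K : ℕ) (n : ℤ) :
    (A * (c • del ^ K)).coeff n = c • A.coeff (n - K) := by
  rw [del_pow_eq_mono hd1, smul_mono, coeff_mul_mono (by rw [map_rat_smul, hd1, smul_zero]),
    mul_smul_comm, mul_one]

lemma coeff_sum {ι : Type*} (s : Finset ι) (f : ι → PDO R d) (n : ℤ) :
    (∑ i ∈ s, f i).coeff n = ∑ i ∈ s, (f i).coeff n := by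
  classical
  induction s using Finset.induction_on with
  | empty => rfl
  | insert a s ha ih => rw [sum_insert ha, sum_insert ha, ← ih]; rfl

lemma coeff_adj_eq_finsum (A : PDO R d) (n : ℤ) :
    (adj A).coeff n = ∑ᶠ j, adjWeight j n • d^[(j - n).toNat] (A.coeff j) := by
  refine finsum_congr fun j => ?_
  by_cases h : n ≤ j
  · rw [dif_pos (by omega), adjWeight, if_pos h]
  · rw [dif_neg (by omega), adjWeight_of_lt (by omega), zero_smul]

/-- The coefficient of `yᵏ` in `P^y · e^{y∂}`. -/
noncomputable def taylorExpCoeff (P : PDO R d) (k : ℕ) : PDO R d :=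
  ∑ i ∈ range (k + 1),
    ((i.factorial : ℚ)⁻¹ • mapD i P) * (((k - i).factorial : ℚ)⁻¹ • del ^ (k - i))

lemma coeff_taylorExpCoeff (hd1 : d 1 = 0) (P : PDO R d) (k : ℕ) (j : ℤ) :
    (taylorExpCoeff P k).coeff j = ∑ i ∈ range (k + 1),
      (((k - i).factorial : ℚ)⁻¹ * (i.factorial : ℚ)⁻¹) • d^[i] (P.coeff (j - (k - i : ℕ))) := by
  rw [taylorExpCoeff, coeff_sum]
  refine sum_congr rfl fun i _ => ?_
  rw [coeff_mul_smul_del_pow hd1, mul_smul]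
  rfl

lemma coeff_adj_taylorExpCoeff (hd1 : d 1 = 0) (P : PDO R d) (k : ℕ) (n : ℤ) :
    (adj (taylorExpCoeff P k)).coeff n = ∑ᶠ m, ∑ i ∈ range (k + 1),
      (((k - i).factorial : ℚ)⁻¹ * ((i.factorial : ℚ)⁻¹ * adjWeight (m + (k - i : ℕ)) n)) •
        d^[(m - (n - k)).toNat] (P.coeff m) := by
  obtain ⟨N, hN⟩ := P.bdd
  simp_rw [coeff_adj_eq_finsum, coeff_taylorExpCoeff hd1, iterate_map_sum, iterate_map_rat_smul,
    ← Function.iterate_add_apply, smul_sum, smul_smul]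
  rw [finsum_sum_comp_add_right _ _ (fun i => ((k - i : ℕ) : ℤ))]
  · refine finsum_congr fun m => sum_congr rfl fun i hi => ?_
    rw [add_sub_cancel_right]
    by_cases h : n ≤ m + (k - i : ℕ)
    · rw [show (m + (k - i : ℕ) - n).toNat + i = (m - (n - k)).toNat by
        have := mem_range.1 hi; omega]
      ring_nf
    · rw [adjWeight_of_lt (not_le.1 h)]
      simp
  · intro i hi
    refine (Set.finite_Icc n (N + k)).subset fun j hj => ?_
    rw [Function.mem_support] at hj
    constructor
    · by_contra hlt
      exact hj (by rw [adjWeight_of_lt (not_le.1 hlt), zero_mul, zero_smul])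
    · by_contra hgt
      exact hj (by rw [hN _ (by omega), iterD_zero, smul_zero])

theorem adj_mul_smul_del_pow_eq_adj_taylorExpCoeff (hd1 : d 1 = 0) (P : PDO R d) (k : ℕ) :
    adj P * (((-1) ^ k * (k.factorial : ℚ)⁻¹) • del ^ k) = adj (taylorExpCoeff P k) := by
  refine ext' (funext fun n => ?_)
  rw [coeff_mul_smul_del_pow hd1, coeff_adj_eq_finsum, coeff_adj_taylorExpCoeff hd1, smul_finsum]
  refine finsum_congr fun m => ?_
  rw [← sum_smul, sum_factorial_inv_mul_adjWeight, smul_smul]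

lemma ofSymbol_mapD (hd : Leibniz d) {h : Rˣ} (hdh : d h = 0) (Q : PDO R d) (i : ℕ) :
    ofSymbol h (mapD i Q) = mapD i (ofSymbol h Q) :=
  ext' (funext fun n =>
    (hd.iterate_map_mul_of_eq_zero (hd.map_units_zpow_eq_zero hdh n) i (Q.coeff n)).symm)

end PDO

/-- The equation for `k` is the coefficient of `yᵏ`. -/
theorem adjoint_exponential_shift
    (R : Type) [CommRing R] [Algebra ℚ R] (d : R →+ R)
    (hd : Leibniz d) (h : Rˣ) (hdh : d (h : R) = 0)
    (Q : PDO R d) :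
    ∀ k : ℕ,
      PDO.adj (PDO.ofSymbol h Q) * ((((-1 : ℚ) ^ k) * ((Nat.factorial k : ℚ))⁻¹) • PDO.del ^ k)
        = PDO.adj (∑ i ∈ Finset.range (k + 1),
            (((Nat.factorial i : ℚ))⁻¹ • PDO.ofSymbol h (PDO.mapD i Q))
              * (((Nat.factorial (k - i) : ℚ))⁻¹ • PDO.del ^ (k - i))) := by
  intro k
  simp only [PDO.ofSymbol_mapD hd hdh]
  exact PDO.adj_mul_smul_del_pow_eq_adj_taylorExpCoeff hd.map_one (PDO.ofSymbol h Q) k
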